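/- Under the absorption condition inf_X (σ - ρ) > c > 0, where ρ(x) = ess-sup_θ ∫_{S²} k(x,θ,θ') dθ', the combined operator K = T⁻¹A₂ is a strict contraction on L^∞(X × S²): there exists 0 < C < 1 with ‖Kw‖_{L^∞} ≤ C‖w‖_{L^∞} for all w ∈ L^∞(X × S²). -/

import Mathlib

/-!
Along the backward ray `t ↦ x - tθ` the attenuation is `exp (-E t)` with `E' = σ`, so
`∫₀ᴸ exp (-E t) σ dt = 1 - exp (-E L) < 1`. On the compact set `closure X` we have `σ ≤ B`,
and the absorption condition `ρ < σ - c` then gives `ρ ≤ (1 - c / B) σ`. The ray stays in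
`closure X` by convexity, so `|A₂ w| ≤ ρ M ≤ (1 - c / B) σ M` along it, and integrating against
the attenuation yields `|K w| ≤ (1 - c / B) M`. The angular integral in `A₂` is controlled because
`μH[2] S²` is finite, `S²` being a Lipschitz image of a square under spherical coordinates.
-/

open MeasureTheory

noncomputable section

abbrev E3 := EuclideanSpace ℝ (Fin 3)

/-- The unit sphere in `ℝ³`. -/
def S2 : Set E3 := Metric.sphere (0 : E3) 1

/-- Optical path length from `y` to `x`. -/
def tau (σ : E3 → ℝ) (x y : E3) : ℝ :=
  ∫ s in (0:ℝ)..‖x - y‖, σ (x - (s / ‖x - y‖) • (x - y))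

/-- The scattering operator with kernel `k`. -/
def A2 (k : E3 → E3 → E3 → ℝ) (w : E3 → E3 → ℝ) (x θ : E3) : ℝ :=
  ∫ θ' in S2, k x θ θ' * w x θ' ∂(μH[2])

/-- The operator solving the non-scattering transport equation with source `S`. -/
def Tinv (σ : E3 → ℝ) (γm : E3 → E3 → E3) (S : E3 → E3 → ℝ) (x θ : E3) : ℝ :=
  ∫ t in (0:ℝ)..‖x - γm x θ‖, Real.exp (-(tau σ x (x - t • θ))) * S (x - t • θ) θ

/-- The combined single-scattering operator `K = T⁻¹ A₂`. -/
def Kop (σ : E3 → ℝ) (γm : E3 → E3 → E3) (k : E3 → E3 → E3 → ℝ)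
    (w : E3 → E3 → ℝ) : E3 → E3 → ℝ :=
  Tinv σ γm (A2 k w)

open Set

theorem LocallyLipschitz.hausdorffMeasure_image_ne_top {ι Y : Type*} [Fintype ι]
    [MetricSpace Y] [MeasurableSpace Y] [BorelSpace Y] {f : (ι → ℝ) → Y}
    (hf : LocallyLipschitz f) {s : Set (ι → ℝ)} (hs : IsCompact s) :
    μH[Fintype.card ι] (f '' s) ≠ ⊤ := by
  obtain ⟨K, hK⟩ := hf.locallyLipschitzOn.exists_lipschitzOnWith_of_compact hs
  refine ne_top_of_le_ne_top ?_ (hK.hausdorffMeasure_image_le (Nat.cast_nonneg _))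
  rw [hausdorffMeasure_pi_real]
  exact ENNReal.mul_ne_top (by simp) hs.measure_ne_top

def sphericalParam (u : Fin 2 → ℝ) : E3 :=
  !₂[Real.sin (u 0) * Real.cos (u 1), Real.sin (u 0) * Real.sin (u 1), Real.cos (u 0)]

theorem contDiff_sphericalParam : ContDiff ℝ 1 sphericalParam :=
  contDiff_piLp' _ fun i => by
    fin_cases i <;> simp only [sphericalParam, Fin.reduceFinMk, Matrix.cons_val] <;> fun_prop

theorem S2_subset_image_sphericalParam :
    S2 ⊆ sphericalParam '' Icc (fun _ => -Real.pi) (fun _ => Real.pi) := by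
  intro v hv
  have hsum : v 0 ^ 2 + v 1 ^ 2 + v 2 ^ 2 = 1 := by
    have := mem_sphere_zero_iff_norm.mp hv
    rw [EuclideanSpace.norm_eq, Real.sqrt_eq_one, Fin.sum_univ_three] at this
    simpa using this
  set z : ℂ := ⟨v 0, v 1⟩
  have hsin : Real.sin (Real.arccos (v 2)) = ‖z‖ := by
    rw [Real.sin_arccos, Complex.norm_def, Complex.normSq_apply]
    congr 1
    linear_combination -hsum
  refine ⟨![Real.arccos (v 2), z.arg], ⟨fun i => ?_, fun i => ?_⟩, ?_⟩
  · fin_cases i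
    · simpa using (neg_nonpos.2 Real.pi_pos.le).trans (Real.arccos_nonneg _)
    · simpa using (Complex.neg_pi_lt_arg z).le
  · fin_cases i
    · simpa using Real.arccos_le_pi _
    · simpa using Complex.arg_le_pi z
  · ext i
    fin_cases i
    · simp [sphericalParam, hsin, Complex.norm_mul_cos_arg, z]
    · simp [sphericalParam, hsin, Complex.norm_mul_sin_arg, z]
    · simp only [sphericalParam, Matrix.cons_val]
      exact Real.cos_arccos (by nlinarith) (by nlinarith)

theorem hausdorffMeasure_S2_ne_top : μH[2] S2 ≠ ⊤ := by
  have h := contDiff_sphericalParam.locallyLipschitz.hausdorffMeasure_image_ne_top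
    (isCompact_Icc (a := fun _ => -Real.pi) (b := fun _ => Real.pi))
  rw [Fintype.card_fin, Nat.cast_ofNat] at h
  exact ne_top_of_le_ne_top h (measure_mono S2_subset_image_sphericalParam)

theorem integrableOn_S2 {f : E3 → ℝ} (hf : Continuous f) : IntegrableOn f S2 μH[2] :=
  hf.continuousOn.integrableOn_of_subset_isCompact (isCompact_sphere 0 1)
    Metric.isClosed_sphere.measurableSet subset_rfl hausdorffMeasure_S2_ne_top

theorem abs_integral_mul_le_integral_mul {α : Type*} [MeasurableSpace α] {μ : Measure α}
    {k w : α → ℝ} (hk0 : ∀ a, 0 ≤ k a) (hk : Integrable k μ) {M : ℝ} (hw : ∀ a, |w a| ≤ M) :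
    |∫ a, k a * w a ∂μ| ≤ (∫ a, k a ∂μ) * M := by
  rw [← integral_mul_const]
  refine (abs_integral_le_integral_abs).trans <|
    integral_mono_of_nonneg (ae_of_all _ fun a => abs_nonneg _) (hk.mul_const M)
      (ae_of_all _ fun a => ?_)
  simp only [abs_mul, abs_of_nonneg (hk0 a)]
  exact mul_le_mul_of_nonneg_left (hw a) (hk0 a)

theorem abs_A2_le {k : E3 → E3 → E3 → ℝ} {x θ : E3} (hk0 : ∀ θ', 0 ≤ k x θ θ')
    (hkc : Continuous (k x θ)) {ρ : ℝ} (hρ : ∫ θ' in S2, k x θ θ' ∂(μH[2]) ≤ ρ)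
    {w : E3 → E3 → ℝ} {M : ℝ} (hM : 0 ≤ M) (hw : ∀ θ', |w x θ'| ≤ M) :
    |A2 k w x θ| ≤ ρ * M :=
  (abs_integral_mul_le_integral_mul hk0 (integrableOn_S2 hkc) hw).trans
    (mul_le_mul_of_nonneg_right hρ hM)

theorem tau_sub_smul (σ : E3 → ℝ) (x : E3) {θ : E3} (hθ : ‖θ‖ = 1) {t : ℝ} (ht : 0 ≤ t) :
    tau σ x (x - t • θ) = ∫ s in (0:ℝ)..t, σ (x - s • θ) := by
  rcases ht.eq_or_lt with rfl | ht
  · simp [tau]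
  have hnorm : ‖x - (x - t • θ)‖ = t := by
    rw [sub_sub_cancel, norm_smul, hθ, Real.norm_of_nonneg ht.le, mul_one]
  rw [tau, hnorm]
  refine intervalIntegral.integral_congr fun s _ => ?_
  rw [sub_sub_cancel, smul_smul, div_mul_cancel₀ s ht.ne']

theorem Tinv_eq_integral (σ : E3 → ℝ) (γm : E3 → E3 → E3) (S : E3 → E3 → ℝ) (x : E3) {θ : E3}
    (hθ : ‖θ‖ = 1) :
    Tinv σ γm S x θ = ∫ t in (0:ℝ)..‖x - γm x θ‖,
      Real.exp (-∫ s in (0:ℝ)..t, σ (x - s • θ)) * S (x - t • θ) θ := by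
  refine intervalIntegral.integral_congr fun t ht => ?_
  rw [uIcc_of_le (norm_nonneg _)] at ht
  simp only [tau_sub_smul σ x hθ ht.1]

theorem integral_exp_neg_integral_mul {g : ℝ → ℝ} (hg : Continuous g) (L : ℝ) :
    ∫ t in (0:ℝ)..L, Real.exp (-∫ s in (0:ℝ)..t, g s) * g t
      = 1 - Real.exp (-∫ s in (0:ℝ)..L, g s) := by
  have hG : ∀ t, HasDerivAt (fun u => ∫ s in (0:ℝ)..u, g s) (g t) t := fun t =>
    (hg.integral_hasStrictDerivAt 0 t).hasDerivAt
  have hE : ∀ t, HasDerivAt (fun u => -Real.exp (-∫ s in (0:ℝ)..u, g s))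
      (Real.exp (-∫ s in (0:ℝ)..t, g s) * g t) t := fun t => by
    simpa using ((hG t).fun_neg.exp).fun_neg
  have hG_cont : Continuous fun u => ∫ s in (0:ℝ)..u, g s :=
    intervalIntegral.continuous_primitive hg.intervalIntegrable 0
  rw [intervalIntegral.integral_eq_sub_of_hasDerivAt (fun t _ => hE t)
    ((hG_cont.neg.rexp.mul hg).intervalIntegrable _ _)]
  simp only [intervalIntegral.integral_same, neg_zero, Real.exp_zero]
  ring

theorem abs_integral_exp_neg_integral_mul_le {g f : ℝ → ℝ} (hg : Continuous g) {L D : ℝ}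
    (hL : 0 ≤ L) (hD : 0 ≤ D) (hf : ∀ t ∈ Ioc 0 L, |f t| ≤ g t * D) :
    |∫ t in (0:ℝ)..L, Real.exp (-∫ s in (0:ℝ)..t, g s) * f t| ≤ D := by
  have hG_cont : Continuous fun u => ∫ s in (0:ℝ)..u, g s :=
    intervalIntegral.continuous_primitive hg.intervalIntegrable 0
  have hbound : ∀ t ∈ Ioc 0 L, ‖Real.exp (-∫ s in (0:ℝ)..t, g s) * f t‖
      ≤ Real.exp (-∫ s in (0:ℝ)..t, g s) * g t * D := fun t ht => by
    rw [Real.norm_eq_abs, abs_mul, Real.abs_exp, mul_assoc]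
    exact mul_le_mul_of_nonneg_left (hf t ht) (Real.exp_nonneg _)
  calc |∫ t in (0:ℝ)..L, Real.exp (-∫ s in (0:ℝ)..t, g s) * f t|
      ≤ ∫ t in (0:ℝ)..L, Real.exp (-∫ s in (0:ℝ)..t, g s) * g t * D :=
        intervalIntegral.norm_integral_le_of_norm_le hL (ae_of_all _ hbound)
          ((hG_cont.neg.rexp.mul hg).mul continuous_const |>.intervalIntegrable _ _)
    _ = (1 - Real.exp (-∫ s in (0:ℝ)..L, g s)) * D := by
        rw [intervalIntegral.integral_mul_const, integral_exp_neg_integral_mul hg]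
    _ ≤ D := by nlinarith [Real.exp_pos (-∫ s in (0:ℝ)..L, g s)]

theorem Convex.sub_smul_mem {E : Type*} [AddCommGroup E] [Module ℝ E] {s : Set E}
    (hs : Convex ℝ s) {x θ : E} {L t : ℝ} (hx : x ∈ s)
    (hxL : x - L • θ ∈ s) (ht : t ∈ Icc 0 L) : x - t • θ ∈ s := by
  have h := hs.add_smul_mem hx (y := -(L • θ)) (by rwa [← sub_eq_add_neg])
    ⟨div_nonneg ht.1 (ht.1.trans ht.2), div_le_one_of_le₀ ht.2 (ht.1.trans ht.2)⟩
  rwa [smul_neg, smul_smul, div_mul_cancel_of_imp (fun hL => by simp_all [le_antisymm_iff]),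
    ← sub_eq_add_neg] at h

theorem le_one_sub_div_mul_of_lt_sub {ρ σ c B : ℝ} (hc : 0 < c) (hB : 0 < B) (hσB : σ ≤ B)
    (h : c < σ - ρ) : ρ ≤ (1 - c / B) * σ := by
  have : c / B * σ ≤ c := by
    rw [div_mul_eq_mul_div, div_le_iff₀ hB]; exact mul_le_mul_of_nonneg_left hσB hc.le
  linarith

theorem K_contraction_general (X : Set E3) (hXb : Bornology.IsBounded X) (hXc : Convex ℝ X)
    (σ : E3 → ℝ) (hσc : Continuous σ)
    (k : E3 → E3 → E3 → ℝ) (hkc : Continuous fun p : E3 × E3 × E3 => k p.1 p.2.1 p.2.2)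
    (hk0 : ∀ x θ θ', 0 ≤ k x θ θ')
    (γm : E3 → E3 → E3)
    (hγbd : ∀ x ∈ closure X, ∀ θ ∈ S2, γm x θ ∈ frontier X)
    (hγray : ∀ x ∈ closure X, ∀ θ ∈ S2, ∃ t : ℝ, 0 ≤ t ∧ γm x θ = x - t • θ)
    (ρ : E3 → ℝ) (hρ : ∀ x θ, (∫ θ' in S2, k x θ θ' ∂(μH[2])) ≤ ρ x)
    (c : ℝ) (hc : 0 < c)
    (habs : ∀ x ∈ closure X, c < σ x - ρ x) :
    ∃ C : ℝ, 0 < C ∧ C < 1 ∧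
      ∀ (w : E3 → E3 → ℝ), Measurable (fun p : E3 × E3 => w p.1 p.2) →
        ∀ M : ℝ, (∀ x θ, |w x θ| ≤ M) →
          ∀ x ∈ X, ∀ θ ∈ S2, |Kop σ γm k w x θ| ≤ C * M := by
  obtain ⟨B, hcB, hσB⟩ :=
    (hXb.isCompact_closure.bddAbove_image hσc.continuousOn).exists_ge (c + 1)
  have hB : 0 < B := by linarith
  have hC : 0 < 1 - c / B := by rw [sub_pos, div_lt_one hB]; linarith
  refine ⟨1 - c / B, hC, by linarith [div_pos hc hB], fun w _ M hw x hx θ hθ => ?_⟩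
  have hM : 0 ≤ M := (abs_nonneg _).trans (hw 0 0)
  have hθ1 : ‖θ‖ = 1 := mem_sphere_zero_iff_norm.mp hθ
  obtain ⟨L, hL, hγ⟩ := hγray x (subset_closure hx) θ hθ
  have hγL : ‖x - γm x θ‖ = L := by
    rw [hγ, sub_sub_cancel, norm_smul, hθ1, Real.norm_of_nonneg hL, mul_one]
  have hray : ∀ t ∈ Icc 0 L, x - t • θ ∈ closure X := fun t ht =>
    hXc.closure.sub_smul_mem (subset_closure hx)
      (hγ ▸ frontier_subset_closure (hγbd x (subset_closure hx) θ hθ)) ht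
  rw [Kop, Tinv_eq_integral σ γm _ x hθ1, hγL]
  refine abs_integral_exp_neg_integral_mul_le (by fun_prop) hL (mul_nonneg hC.le hM) ?_
  intro t ht
  have hy := hray t (Ioc_subset_Icc_self ht)
  have hkθ : Continuous (k (x - t • θ) θ) := by fun_prop
  calc |A2 k w (x - t • θ) θ| ≤ ρ (x - t • θ) * M := abs_A2_le (hk0 _ θ) hkθ (hρ _ θ) hM (hw _)
    _ ≤ (1 - c / B) * σ (x - t • θ) * M :=
        mul_le_mul_of_nonneg_right
          (le_one_sub_div_mul_of_lt_sub hc hB (hσB _ ⟨_, hy, rfl⟩) (habs _ hy)) hM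
    _ = σ (x - t • θ) * ((1 - c / B) * M) := by ring

/-- Under the absorption condition `inf_X (σ - ρ) > c > 0`, the operator
`K = T⁻¹A₂` is a strict contraction on `L^∞(X × S²)`. -/
theorem K_contraction (X : Set E3) (hXb : Bornology.IsBounded X) (hXc : Convex ℝ X)
    (σ : E3 → ℝ) (hσc : Continuous σ) (hσ0 : ∀ z, 0 ≤ σ z)
    (k : E3 → E3 → E3 → ℝ) (hkc : Continuous fun p : E3 × E3 × E3 => k p.1 p.2.1 p.2.2)
    (hk0 : ∀ x θ θ', 0 ≤ k x θ θ')
    (γm : E3 → E3 → E3)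
    (hγbd : ∀ x ∈ closure X, ∀ θ ∈ S2, γm x θ ∈ frontier X)
    (hγray : ∀ x ∈ closure X, ∀ θ ∈ S2, ∃ t : ℝ, 0 ≤ t ∧ γm x θ = x - t • θ)
    (ρ : E3 → ℝ) (hρ : ∀ x θ, (∫ θ' in S2, k x θ θ' ∂(μH[2])) ≤ ρ x)
    (c : ℝ) (hc : 0 < c)
    (habs : ∀ x ∈ closure X, c < σ x - ρ x) :
    ∃ C : ℝ, 0 < C ∧ C < 1 ∧
      ∀ (w : E3 → E3 → ℝ), Measurable (fun p : E3 × E3 => w p.1 p.2) →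
        ∀ M : ℝ, (∀ x θ, |w x θ| ≤ M) →
          ∀ x ∈ X, ∀ θ ∈ S2, |Kop σ γm k w x θ| ≤ C * M :=
  K_contraction_general X hXb hXc σ hσc k hkc hk0 γm hγbd hγray ρ hρ c hc habs

end
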